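/- Suppose Λ₁ and Λ₂ are complementary, primitive sublattices of an integral, positive definite, unimodular lattice Λ, with restriction maps r_i : Λ → Λ_i*. Then for i = 1, 2 the map r_i carries Short(Λ) into Short(Λ_i); moreover, the induced map Short(Λ) → Short(Λ₁) is surjective if and only if the induced map Short(Λ) → Short(Λ₂) is surjective. -/

import Mathlib

/-!
Write `|x|` for `⟨x, x⟩`. Since `|χ + 2y| = |χ| + 4(⟨χ, y⟩ + |y|)`, a characteristic covector
`χ` is short iff `⟨χ, y⟩ + |y| ≥ 0` for every lattice vector `y`; for `y ∈ Λᵢ` this only sees the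
restriction of `χ` to `Λᵢ`, so restriction preserves shortness.

For the transfer of surjectivity, extend `ξ ∈ Short(Λ₂)` (by primitivity) to some `χ ∈ Char(Λ)`
and minimize `|χ|` over `χ + 2Λ₁`; then the restriction `a` of `χ` to `Λ₁` is short. A short `χ'`
restricting to `a` differs from `χ` by `2t` with `t ⊥ Λ₁`, so `t ∈ Λ₂`, as a primitive sublattice
is saturated. Shortness of `ξ` now gives `|χ| ≤ |χ + 2t| = |χ'|`, so `χ` is short and restricts
to `ξ`.
-/

set_option linter.unusedSectionVars false

open Matrix BigOperators

namespace Greene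

/-- A rational number is an integer. -/
def isInt (q : ℚ) : Prop := ∃ m : ℤ, q = (m : ℚ)

section LatticeDefs

variable {ι : Type} [Fintype ι] [DecidableEq ι]
variable {ι' : Type} [Fintype ι'] [DecidableEq ι']

/-- The bilinear form on `ι → ℚ` with (integral) Gram matrix `B`. -/
def qform (B : Matrix ι ι ℤ) (x y : ι → ℚ) : ℚ :=
  x ⬝ᵥ ((B.map (Int.cast : ℤ → ℚ)) *ᵥ y)

/-- The set of integer vectors: the standard lattice inside `ι → ℚ`. -/
def intVecs (ι : Type) [Fintype ι] [DecidableEq ι] : Set (ι → ℚ) :=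
  {x | ∀ i, isInt (x i)}

lemma qform_zero_left (B : Matrix ι ι ℤ) (y : ι → ℚ) : qform B 0 y = 0 :=
  zero_dotProduct _

lemma qform_add_left (B : Matrix ι ι ℤ) (x x' y : ι → ℚ) :
    qform B (x + x') y = qform B x y + qform B x' y := add_dotProduct _ _ _

lemma qform_neg_left (B : Matrix ι ι ℤ) (x y : ι → ℚ) :
    qform B (-x) y = -qform B x y := neg_dotProduct _ _

/-- The dual lattice `S* = {x ∈ span_ℚ S | ⟨x,y⟩ ∈ ℤ for all y ∈ S}`. -/
def dualOf (B : Matrix ι ι ℤ) (S : Set (ι → ℚ)) : AddSubgroup (ι → ℚ) where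
  carrier := {x | x ∈ Submodule.span ℚ S ∧ ∀ y ∈ S, isInt (qform B x y)}
  zero_mem' := ⟨Submodule.zero_mem _, fun y _ => ⟨0, by simp [qform_zero_left]⟩⟩
  add_mem' := by
    intro a b ha hb
    refine ⟨Submodule.add_mem _ ha.1 hb.1, fun y hy => ?_⟩
    obtain ⟨m, hm⟩ := ha.2 y hy
    obtain ⟨m', hm'⟩ := hb.2 y hy
    exact ⟨m + m', by rw [qform_add_left, hm, hm']; push_cast; ring⟩
  neg_mem' := by
    intro a ha
    refine ⟨Submodule.neg_mem _ ha.1, fun y hy => ?_⟩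
    obtain ⟨m, hm⟩ := ha.2 y hy
    exact ⟨-m, by rw [qform_neg_left, hm]; push_cast; ring⟩

/-- Characteristic covectors: `χ ∈ S*` with `⟨χ,y⟩ ≡ ⟨y,y⟩ (mod 2)` for all `y ∈ S`. -/
def CharOf (B : Matrix ι ι ℤ) (S : Set (ι → ℚ)) : Set (ι → ℚ) :=
  {χ | χ ∈ dualOf B S ∧ ∀ y ∈ S, ∃ m : ℤ, qform B χ y - qform B y y = 2 * (m : ℚ)}

/-- Two covectors are in the same class mod `2S`. -/
def SameClass (S : Set (ι → ℚ)) (χ χ' : ι → ℚ) : Prop :=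
  ∃ y ∈ S, χ' = χ + (2 : ℚ) • y

/-- Short characteristic covectors: minimal norm in their class mod `2S`. -/
def ShortOf (B : Matrix ι ι ℤ) (S : Set (ι → ℚ)) : Set (ι → ℚ) :=
  {χ | χ ∈ CharOf B S ∧ ∀ χ' ∈ CharOf B S, SameClass S χ χ' → qform B χ χ ≤ qform B χ' χ'}

/-- Rank of a lattice: dimension of its rational span. -/
noncomputable def rkOf (S : Set (ι → ℚ)) : ℕ := Module.finrank ℚ (Submodule.span ℚ S)

/-- The lattice `S` sitting inside its dual. -/
def latIn (B : Matrix ι ι ℤ) (S : Set (ι → ℚ)) : AddSubgroup (dualOf B S) :=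
  AddSubgroup.closure {x | (x : ι → ℚ) ∈ S}

/-- The discriminant group `S*/S`. -/
def disc (B : Matrix ι ι ℤ) (S : Set (ι → ℚ)) : Type :=
  dualOf B S ⧸ latIn B S

noncomputable instance (B : Matrix ι ι ℤ) (S : Set (ι → ℚ)) : AddCommGroup (disc B S) :=
  inferInstanceAs (AddCommGroup (dualOf B S ⧸ latIn B S))

/-- The class of a dual vector in the discriminant group. -/
def dmk (B : Matrix ι ι ℤ) (S : Set (ι → ℚ)) {x : ι → ℚ} (hx : x ∈ dualOf B S) :
    disc B S := QuotientAddGroup.mk (⟨x, hx⟩ : dualOf B S)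

/-- `S` is an additive subgroup (a sublattice, when contained in a lattice). -/
def IsLat (S : Set (ι → ℚ)) : Prop :=
  (0 : ι → ℚ) ∈ S ∧ ∀ x ∈ S, ∀ y ∈ S, x - y ∈ S

/-- The form is integer valued on `S`. -/
def IntegralOn (B : Matrix ι ι ℤ) (S : Set (ι → ℚ)) : Prop :=
  ∀ x ∈ S, ∀ y ∈ S, isInt (qform B x y)

/-- Unimodularity: the dual lattice equals the lattice. -/
def UnimodularOn (B : Matrix ι ι ℤ) (S : Set (ι → ℚ)) : Prop :=
  ((dualOf B S : AddSubgroup (ι → ℚ)) : Set (ι → ℚ)) = S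

/-- Positive definiteness of the form on the span of `S`. -/
def PosDefOn (B : Matrix ι ι ℤ) (S : Set (ι → ℚ)) : Prop :=
  ∀ x ∈ Submodule.span ℚ S, x ≠ 0 → 0 < qform B x x

/-- Orthogonality of two sublattices. -/
def OrthogonalSets (B : Matrix ι ι ℤ) (S T : Set (ι → ℚ)) : Prop :=
  ∀ x ∈ S, ∀ y ∈ T, qform B x y = 0

/-- `S, T` are complementary sublattices of `L`: orthogonal with ranks summing to `rk L`. -/
noncomputable def ComplementaryIn (B : Matrix ι ι ℤ) (L S T : Set (ι → ℚ)) : Prop :=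
  OrthogonalSets B S T ∧ rkOf S + rkOf T = rkOf L

/-- `S ⊆ L` is a primitive sublattice: the restriction map `L* → S*` surjects. -/
def PrimitiveIn (B : Matrix ι ι ℤ) (L S : Set (ι → ℚ)) : Prop :=
  ∀ x ∈ dualOf B S, ∃ z ∈ dualOf B L, ∀ u ∈ S, qform B z u = qform B x u

/-- `s` is the signature of the form restricted to the span of `S` (Sylvester form). -/
def IsSignatureOf (B : Matrix ι ι ℤ) (S : Set (ι → ℚ)) (s : ℤ) : Prop :=
  ∃ (p q : ℕ) (v : Fin (p + q) → (ι → ℚ)),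
    (∀ i, v i ∈ Submodule.span ℚ S) ∧
    Submodule.span ℚ (Set.range v) = Submodule.span ℚ S ∧
    LinearIndependent ℚ v ∧
    (∀ i j, i ≠ j → qform B (v i) (v j) = 0) ∧
    (∀ i : Fin (p + q),
      if (i : ℕ) < p then 0 < qform B (v i) (v i) else qform B (v i) (v i) < 0) ∧
    s = (p : ℤ) - (q : ℤ)

/-- `S` admits an orthonormal basis of `n` elements, i.e. `S ≅ ℤⁿ`. -/
def HasOrthonormalBasis (B : Matrix ι ι ℤ) (S : Set (ι → ℚ)) (n : ℕ) : Prop :=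
  ∃ v : Fin n → (ι → ℚ), (∀ i, v i ∈ S) ∧
    (∀ i j, qform B (v i) (v j) = if i = j then 1 else 0) ∧
    (∀ x ∈ S, ∃ c : Fin n → ℤ, x = ∑ i, (c i : ℚ) • v i)

/-- Isomorphism of lattices: an additive bijection preserving the forms. -/
def LatIso (B : Matrix ι ι ℤ) (S : Set (ι → ℚ)) (B' : Matrix ι' ι' ℤ) (S' : Set (ι' → ℚ)) :
    Prop :=
  ∃ f : (ι → ℚ) → (ι' → ℚ), Set.BijOn f S S' ∧
    (∀ x ∈ S, ∀ y ∈ S, f (x + y) = f x + f y) ∧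
    (∀ x ∈ S, ∀ y ∈ S, qform B' (f x) (f y) = qform B x y)

/-- An isomorphism of the torsors `C(S₁) → C(S₂)` (given on representatives by `Φ`),
covering the group isomorphism `ψ` of discriminant groups. -/
def TorsorMapIso (B₁ : Matrix ι ι ℤ) (S₁ : Set (ι → ℚ))
    (B₂ : Matrix ι' ι' ℤ) (S₂ : Set (ι' → ℚ))
    (Φ : (ι → ℚ) → (ι' → ℚ)) (ψ : disc B₁ S₁ ≃+ disc B₂ S₂) : Prop :=
  (∀ χ ∈ CharOf B₁ S₁, Φ χ ∈ CharOf B₂ S₂) ∧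
  (∀ χ ∈ CharOf B₁ S₁, ∀ χ' ∈ CharOf B₁ S₁,
    (SameClass S₁ χ χ' ↔ SameClass S₂ (Φ χ) (Φ χ'))) ∧
  (∀ μ ∈ CharOf B₂ S₂, ∃ χ ∈ CharOf B₁ S₁, SameClass S₂ (Φ χ) μ) ∧
  (∀ χ ∈ CharOf B₁ S₁, ∀ χ' ∈ CharOf B₁ S₁,
    ∀ (x : ι → ℚ) (y : ι' → ℚ) (hx : x ∈ dualOf B₁ S₁) (hy : y ∈ dualOf B₂ S₂),
      χ' = χ + (2 : ℚ) • x → Φ χ' = Φ χ + (2 : ℚ) • y →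
      ψ (dmk B₁ S₁ hx) = dmk B₂ S₂ hy)

/-- Compatibility of `Φ` with the `d`-invariants: `d₂([Φ χ]) = ε · d₁([χ])`,
where `d` is the minimum of `(|χ'|² - rk)/4` over the class. -/
noncomputable def DCompat (B₁ : Matrix ι ι ℤ) (S₁ : Set (ι → ℚ))
    (B₂ : Matrix ι' ι' ℤ) (S₂ : Set (ι' → ℚ))
    (ε : ℚ) (Φ : (ι → ℚ) → (ι' → ℚ)) : Prop :=
  ∀ χ ∈ CharOf B₁ S₁, ∀ q : ℚ,
    IsLeast {t | ∃ χ' ∈ CharOf B₁ S₁, SameClass S₁ χ χ' ∧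
      t = (qform B₁ χ' χ' - (rkOf S₁ : ℚ)) / 4} q →
    IsLeast {t | ∃ μ ∈ CharOf B₂ S₂, SameClass S₂ (Φ χ) μ ∧
      t = (qform B₂ μ μ - (rkOf S₂ : ℚ)) / 4} (ε * q)

/-- Compatibility of `Φ` with the `ρ`-invariants: `ρ₂([Φ χ]) ≡ ε · ρ₁([χ]) (mod 2)`. -/
def RhoCompat (B₁ : Matrix ι ι ℤ) (S₁ : Set (ι → ℚ))
    (B₂ : Matrix ι' ι' ℤ) (S₂ : Set (ι' → ℚ))
    (ε : ℚ) (Φ : (ι → ℚ) → (ι' → ℚ)) : Prop :=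
  ∀ χ ∈ CharOf B₁ S₁, ∀ s₁ s₂ : ℤ, IsSignatureOf B₁ S₁ s₁ → IsSignatureOf B₂ S₂ s₂ →
    ∃ m : ℤ, (qform B₂ (Φ χ) (Φ χ) - (s₂ : ℚ)) / 4 - ε * ((qform B₁ χ χ - (s₁ : ℚ)) / 4)
      = 2 * (m : ℚ)

/-- The `d`-invariants `(C(S₁), d₁)` and `(C(S₂), ε·d₂)` are isomorphic. -/
noncomputable def DIso (B₁ : Matrix ι ι ℤ) (S₁ : Set (ι → ℚ))
    (B₂ : Matrix ι' ι' ℤ) (S₂ : Set (ι' → ℚ)) (ε : ℚ) : Prop :=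
  ∃ (Φ : (ι → ℚ) → (ι' → ℚ)) (ψ : disc B₁ S₁ ≃+ disc B₂ S₂),
    TorsorMapIso B₁ S₁ B₂ S₂ Φ ψ ∧ DCompat B₁ S₁ B₂ S₂ ε Φ

end LatticeDefs

/-- An abstract integral lattice, presented by its Gram matrix. -/
structure IntLattice where
  n : ℕ
  B : Matrix (Fin n) (Fin n) ℤ
  symm : B.IsSymm
  nondeg : B.det ≠ 0

/-- The Gram matrix of the orthogonal direct sum `Λ₁ ⊥ Λ₂`. -/
def glueGram (L₁ L₂ : IntLattice) :
    Matrix (Fin L₁.n ⊕ Fin L₂.n) (Fin L₁.n ⊕ Fin L₂.n) ℤ :=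
  Matrix.fromBlocks L₁.B 0 0 L₂.B

/-- The glue lattice `Λ₁ ⊕_ψ Λ₂ = {x + y ∈ Λ₁* ⊕ Λ₂* : ψ(x̄) = ȳ}`. -/
def glueSet (L₁ L₂ : IntLattice)
    (ψ : disc L₁.B (intVecs (Fin L₁.n)) ≃+ disc L₂.B (intVecs (Fin L₂.n))) :
    Set (Fin L₁.n ⊕ Fin L₂.n → ℚ) :=
  {w | ∃ (h₁ : (w ∘ Sum.inl) ∈ dualOf L₁.B (intVecs (Fin L₁.n)))
        (h₂ : (w ∘ Sum.inr) ∈ dualOf L₂.B (intVecs (Fin L₂.n))),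
        ψ (dmk _ _ h₁) = dmk _ _ h₂}

/-- `Λ₁` embedded in the first factor of `Λ₁* ⊕ Λ₂*`. -/
def inlLat (L₁ L₂ : IntLattice) : Set (Fin L₁.n ⊕ Fin L₂.n → ℚ) :=
  {w | (w ∘ Sum.inl) ∈ intVecs (Fin L₁.n) ∧ w ∘ Sum.inr = 0}

/-- `Λ₂` embedded in the second factor of `Λ₁* ⊕ Λ₂*`. -/
def inrLat (L₁ L₂ : IntLattice) : Set (Fin L₁.n ⊕ Fin L₂.n → ℚ) :=
  {w | (w ∘ Sum.inr) ∈ intVecs (Fin L₂.n) ∧ w ∘ Sum.inl = 0}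

/-- Stabilization `S ⊕ ℤᵏ`. -/
def stabSet {ι : Type} [Fintype ι] [DecidableEq ι] (S : Set (ι → ℚ)) (k : ℕ) :
    Set (ι ⊕ Fin k → ℚ) :=
  {w | (w ∘ Sum.inl) ∈ S ∧ ∀ j, isInt (w (Sum.inr j))}

/-- A finite loopless multigraph, with a reference orientation of each edge. -/
structure MultiGraph where
  nV : ℕ
  nE : ℕ
  hd : Fin nE → Fin nV
  tl : Fin nE → Fin nV
  loopless : ∀ e, hd e ≠ tl e

namespace MultiGraph

/-- The boundary map `C₁(G;ℚ) → C₀(G;ℚ)`, `∂ e = head(e) − tail(e)`. -/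
def bndry (G : MultiGraph) (x : Fin G.nE → ℚ) : Fin G.nV → ℚ :=
  fun v => ∑ e, x e * ((if G.hd e = v then 1 else 0) - (if G.tl e = v then 1 else 0))

/-- The flow lattice `ℱ(G) = ker ∂ ∩ C₁(G;ℤ)`. -/
def flowSet (G : MultiGraph) : Set (Fin G.nE → ℚ) :=
  {x | (∀ e, isInt (x e)) ∧ G.bndry x = 0}

/-- The cut lattice `𝒞(G) = im ∂* ∩ C₁(G;ℤ)`. -/
def cutSet (G : MultiGraph) : Set (Fin G.nE → ℚ) :=
  {x | (∀ e, isInt (x e)) ∧ ∃ g : Fin G.nV → ℚ, ∀ e, x e = g (G.hd e) - g (G.tl e)}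

/-- Reachability using only edges from the set `A`. -/
def ReachIn (G : MultiGraph) (A : Set (Fin G.nE)) : Fin G.nV → Fin G.nV → Prop :=
  Relation.ReflTransGen
    (fun u v => ∃ e ∈ A, (G.hd e = u ∧ G.tl e = v) ∨ (G.hd e = v ∧ G.tl e = u))

def Connected (G : MultiGraph) : Prop := ∀ u v, G.ReachIn Set.univ u v

/-- 2-edge-connectedness: connected, and removing any one edge leaves it connected. -/
def TwoEdgeConnected (G : MultiGraph) : Prop :=
  G.Connected ∧ ∀ e : Fin G.nE, ∀ u v, G.ReachIn {e}ᶜ u v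

/-- `C` is the edge set of a cycle of `G`. -/
def IsCycleEdgeSet (G : MultiGraph) (C : Set (Fin G.nE)) : Prop :=
  ∃ k : ℕ, 0 < k ∧ ∃ (e : Fin k → Fin G.nE) (v : Fin k → Fin G.nV),
    Function.Injective e ∧ Function.Injective v ∧ C = Set.range e ∧
    ∀ i, (G.hd (e i) = v (finRotate k i) ∧ G.tl (e i) = v i) ∨
         (G.tl (e i) = v (finRotate k i) ∧ G.hd (e i) = v i)

/-- A maximal spanning forest: acyclic and realizing all of `G`'s reachability. -/
def IsMaxForest (G : MultiGraph) (F : Finset (Fin G.nE)) : Prop :=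
  (∀ C, G.IsCycleEdgeSet C → ¬(C ⊆ (↑F : Set (Fin G.nE)))) ∧
  ∀ u v, G.ReachIn Set.univ u v → G.ReachIn (↑F) u v

open Classical in
/-- The fundamental cut vector of `e ∈ F`:
`+1` on edges leaving the component `K₁` of the tail of `e` in `F − e`,
`−1` on edges entering it, `0` otherwise. -/
noncomputable def cutVec (G : MultiGraph) (F : Finset (Fin G.nE)) (e : Fin G.nE) :
    Fin G.nE → ℚ := fun j =>
  (if G.ReachIn (↑(F.erase e)) (G.tl j) (G.tl e) then 1 else 0)
    - (if G.ReachIn (↑(F.erase e)) (G.hd j) (G.tl e) then 1 else 0)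

/-- `x` is the fundamental cycle vector of `e ∉ F`: the unique flow supported on
`F ∪ {e}` whose coefficient on `e` is `+1`. -/
def IsFundCycleVec (G : MultiGraph) (F : Finset (Fin G.nE)) (e : Fin G.nE)
    (x : Fin G.nE → ℚ) : Prop :=
  G.bndry x = 0 ∧ (∀ j, j ∉ F → j ≠ e → x j = 0) ∧ x e = 1

/-- Reorienting the edges of `G`: `o e = true` keeps the reference direction. -/
def reorient (G : MultiGraph) (o : Fin G.nE → Bool) : MultiGraph :=
  { G with
    hd := fun e => if o e then G.hd e else G.tl e
    tl := fun e => if o e then G.tl e else G.hd e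
    loopless := by
      intro e
      by_cases h : o e = true
      · simpa [h] using G.loopless e
      · simpa [h] using (G.loopless e).symm }

end MultiGraph

/-- A 2-isomorphism: a bijection of edge sets preserving edge sets of cycles. -/
def TwoIsomorphic (G G' : MultiGraph) : Prop :=
  ∃ σ : Fin G.nE ≃ Fin G'.nE, ∀ C, G.IsCycleEdgeSet C ↔ G'.IsCycleEdgeSet (σ '' C)


section

variable {ι : Type} [Fintype ι] [DecidableEq ι] {B : Matrix ι ι ℤ}

lemma isInt_intCast (m : ℤ) : isInt (m : ℚ) := ⟨m, rfl⟩

lemma isInt_add {a b : ℚ} (ha : isInt a) (hb : isInt b) : isInt (a + b) := by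
  obtain ⟨m, rfl⟩ := ha; obtain ⟨k, rfl⟩ := hb; exact ⟨m + k, by push_cast; ring⟩

lemma isInt_sub {a b : ℚ} (ha : isInt a) (hb : isInt b) : isInt (a - b) := by
  obtain ⟨m, rfl⟩ := ha; obtain ⟨k, rfl⟩ := hb; exact ⟨m - k, by push_cast; ring⟩

lemma isInt_mul {a b : ℚ} (ha : isInt a) (hb : isInt b) : isInt (a * b) := by
  obtain ⟨m, rfl⟩ := ha; obtain ⟨k, rfl⟩ := hb; exact ⟨m * k, by push_cast; ring⟩

lemma isInt_sum {κ : Type*} {s : Finset κ} {f : κ → ℚ} (h : ∀ i ∈ s, isInt (f i)) :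
    isInt (∑ i ∈ s, f i) := by
  classical
  induction s using Finset.induction with
  | empty => exact ⟨0, by simp⟩
  | insert k s hk ih =>
    rw [Finset.sum_insert hk]
    exact isInt_add (h k (s.mem_insert_self k)) (ih fun i hi => h i (Finset.mem_insert_of_mem hi))

lemma intVecs_add {x y : ι → ℚ} (hx : x ∈ intVecs ι) (hy : y ∈ intVecs ι) :
    x + y ∈ intVecs ι := fun i => isInt_add (hx i) (hy i)

lemma intVecs_sub {x y : ι → ℚ} (hx : x ∈ intVecs ι) (hy : y ∈ intVecs ι) :
    x - y ∈ intVecs ι := fun i => isInt_sub (hx i) (hy i)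

lemma intVecs_two_smul {x : ι → ℚ} (hx : x ∈ intVecs ι) : (2 : ℚ) • x ∈ intVecs ι := by
  rw [two_smul]; exact intVecs_add hx hx

lemma span_intVecs : Submodule.span ℚ (intVecs ι) = ⊤ := by
  refine eq_top_iff.mpr ((Pi.basisFun ℚ ι).span_eq.symm.le.trans (Submodule.span_mono ?_))
  rintro _ ⟨i, rfl⟩ j
  by_cases h : i = j
  · exact ⟨1, by simp [h]⟩
  · exact ⟨0, by simp [h]⟩

def qformBilin (B : Matrix ι ι ℤ) : LinearMap.BilinForm ℚ (ι → ℚ) :=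
  Matrix.toLinearMap₂' ℚ (B.map (Int.cast : ℤ → ℚ))

lemma qformBilin_apply (B : Matrix ι ι ℤ) (x y : ι → ℚ) : qformBilin B x y = qform B x y :=
  Matrix.toLinearMap₂'_apply' _ _ _

lemma qform_add_right (B : Matrix ι ι ℤ) (x y y' : ι → ℚ) :
    qform B x (y + y') = qform B x y + qform B x y' := by
  simp only [← qformBilin_apply, map_add]

lemma qform_sub_left (B : Matrix ι ι ℤ) (x x' y : ι → ℚ) :
    qform B (x - x') y = qform B x y - qform B x' y := by
  simp only [← qformBilin_apply, map_sub, LinearMap.sub_apply]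

lemma qform_smul_left (B : Matrix ι ι ℤ) (c : ℚ) (x y : ι → ℚ) :
    qform B (c • x) y = c * qform B x y := by
  simp only [← qformBilin_apply, map_smul, LinearMap.smul_apply, smul_eq_mul]

lemma qform_smul_right (B : Matrix ι ι ℤ) (c : ℚ) (x y : ι → ℚ) :
    qform B x (c • y) = c * qform B x y := by
  simp only [← qformBilin_apply, map_smul, smul_eq_mul]

lemma qform_comm (hB : B.IsSymm) (x y : ι → ℚ) : qform B x y = qform B y x := by
  rw [qform, dotProduct_mulVec, ← mulVec_transpose, ← transpose_map, hB.eq, dotProduct_comm]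
  rfl

lemma qform_add_two_smul_self (hB : B.IsSymm) (x t : ι → ℚ) :
    qform B (x + (2 : ℚ) • t) (x + (2 : ℚ) • t)
      = qform B x x + 4 * (qform B x t + qform B t t) := by
  rw [qform_add_left, qform_add_right, qform_add_right, qform_smul_left, qform_smul_left,
    qform_smul_right, qform_smul_right, qform_comm hB t x]
  ring

lemma isInt_qform (B : Matrix ι ι ℤ) {x y : ι → ℚ} (hx : x ∈ intVecs ι) (hy : y ∈ intVecs ι) :
    isInt (qform B x y) := by
  simp only [qform, dotProduct, mulVec, Matrix.map_apply, Finset.mul_sum]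
  exact isInt_sum fun i _ => isInt_sum fun j _ =>
    isInt_mul (hx i) (isInt_mul (isInt_intCast _) (hy j))

lemma qform_eq_of_eqOn {S : Set (ι → ℚ)} {a b : ι → ℚ} (h : ∀ u ∈ S, qform B a u = qform B b u)
    {u : ι → ℚ} (hu : u ∈ Submodule.span ℚ S) : qform B a u = qform B b u := by
  have hS : S ⊆ (LinearMap.ker (qformBilin B (a - b)) : Set (ι → ℚ)) := fun v hv => by
    simp [qformBilin_apply, h v hv]
  simpa [qformBilin_apply, qform_sub_left, sub_eq_zero] using Submodule.span_le.mpr hS hu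

lemma mem_span_intVecs (x : ι → ℚ) : x ∈ Submodule.span ℚ (intVecs ι) := by
  rw [span_intVecs]; trivial

lemma qform_self_nonneg (hpos : PosDefOn B (intVecs ι)) (x : ι → ℚ) : 0 ≤ qform B x x := by
  rcases eq_or_ne x 0 with rfl | hx
  · simp [qform]
  · exact (hpos x (mem_span_intVecs x) hx).le

lemma eq_zero_of_qform_self (hpos : PosDefOn B (intVecs ι)) {x : ι → ℚ} (h : qform B x x = 0) :
    x = 0 := by
  by_contra hx
  exact (hpos x (mem_span_intVecs x) hx).ne' h

lemma qformBilin_restrict_nondegenerate (hpos : PosDefOn B (intVecs ι))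
    (W : Submodule ℚ (ι → ℚ)) : ((qformBilin B).restrict W).Nondegenerate :=
  ⟨fun w hw => Subtype.ext (eq_zero_of_qform_self hpos (by simpa [qformBilin_apply] using hw w)),
    fun w hw => Subtype.ext (eq_zero_of_qform_self hpos (by simpa [qformBilin_apply] using hw w))⟩

lemma exists_mem_forall_qform_eq (hpos : PosDefOn B (intVecs ι)) (W : Submodule ℚ (ι → ℚ))
    (f : Module.Dual ℚ W) : ∃ w ∈ W, ∀ u : W, qform B w u = f u := by
  set w := ((qformBilin B).restrict W).toDual (qformBilin_restrict_nondegenerate hpos W) |>.symm f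
  refine ⟨w, w.2, fun u => ?_⟩
  rw [← qformBilin_apply]
  exact LinearMap.BilinForm.apply_toDual_symm_apply (B := (qformBilin B).restrict W) f u

lemma exists_mem_span_forall_qform_eq (hpos : PosDefOn B (intVecs ι)) (S : Set (ι → ℚ))
    (x : ι → ℚ) : ∃ w ∈ Submodule.span ℚ S, ∀ u ∈ S, qform B w u = qform B x u := by
  obtain ⟨w, hw, hwx⟩ := exists_mem_forall_qform_eq hpos (Submodule.span ℚ S)
    ((qformBilin B x).domRestrict _)
  exact ⟨w, hw, fun u hu => by simpa [qformBilin_apply] using hwx ⟨u, Submodule.subset_span hu⟩⟩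

variable {S S₁ S₂ : Set (ι → ℚ)}

lemma OrthogonalSets.span_span (h : OrthogonalSets B S₁ S₂) :
    OrthogonalSets B (Submodule.span ℚ S₁) (Submodule.span ℚ S₂) := by
  intro x hx y hy
  have hS₁ : ∀ u ∈ S₁, qform B u y = 0 := fun u hu => by
    simpa [qform_zero_left] using
      qform_eq_of_eqOn (b := 0) (fun v hv => by rw [h u hu v hv, qform_zero_left]) hy
  have : S₁ ⊆ (LinearMap.ker ((qformBilin B).flip y) : Set (ι → ℚ)) := fun u hu => by
    simp [qformBilin_apply, hS₁ u hu]
  simpa [qformBilin_apply] using Submodule.span_le.mpr this hx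

lemma OrthogonalSets.symm (hB : B.IsSymm) (h : OrthogonalSets B S₁ S₂) : OrthogonalSets B S₂ S₁ :=
  fun x hx y hy => by rw [qform_comm hB]; exact h y hy x hx

lemma span_sup_span_eq_top (hpos : PosDefOn B (intVecs ι)) (horth : OrthogonalSets B S₁ S₂)
    (hrk : rkOf S₁ + rkOf S₂ = rkOf (intVecs ι)) :
    Submodule.span ℚ S₁ ⊔ Submodule.span ℚ S₂ = ⊤ := by
  have hinf : Submodule.span ℚ S₁ ⊓ Submodule.span ℚ S₂ = ⊥ := eq_bot_iff.mpr fun v hv =>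
    (Submodule.mem_bot ℚ).mpr (eq_zero_of_qform_self hpos (horth.span_span v hv.1 v hv.2))
  apply Submodule.eq_top_of_finrank_eq
  have := Submodule.finrank_sup_add_finrank_inf_eq (Submodule.span ℚ S₁) (Submodule.span ℚ S₂)
  rw [hinf, finrank_bot, add_zero] at this
  rw [this, ← finrank_top ℚ (ι → ℚ), ← span_intVecs]
  exact hrk

lemma mem_span_of_forall_qform_eq_zero (hB : B.IsSymm) (hpos : PosDefOn B (intVecs ι))
    (horth : OrthogonalSets B S₁ S₂) (hsup : Submodule.span ℚ S₁ ⊔ Submodule.span ℚ S₂ = ⊤)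
    {t : ι → ℚ} (ht : ∀ u ∈ S₁, qform B t u = 0) : t ∈ Submodule.span ℚ S₂ := by
  obtain ⟨a, ha, b, hb, rfl⟩ := Submodule.mem_sup.mp (hsup ▸ Submodule.mem_top (x := t))
  have hta : qform B (a + b) a = 0 := by
    simpa [qform_zero_left] using
      qform_eq_of_eqOn (b := 0) (fun u hu => by rw [ht u hu, qform_zero_left]) ha
  rw [qform_add_left, qform_comm hB b, horth.span_span a ha b hb, add_zero] at hta
  simpa [eq_zero_of_qform_self hpos hta] using hb

lemma isLat_intVecs : IsLat (intVecs ι) :=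
  ⟨fun _ => ⟨0, by simp⟩, fun _ hx _ hy => intVecs_sub hx hy⟩

lemma mem_intVecs_of_mem_dualOf (huni : UnimodularOn B (intVecs ι)) {x : ι → ℚ}
    (hx : x ∈ dualOf B (intVecs ι)) : x ∈ intVecs ι := by
  rw [← huni]; exact hx

lemma mem_dualOf_of_mem (hsub : S ⊆ intVecs ι) {t : ι → ℚ} (ht : t ∈ S) : t ∈ dualOf B S :=
  ⟨Submodule.subset_span ht, fun _ hu => isInt_qform B (hsub ht) (hsub hu)⟩

lemma add_two_smul_mem_charOf {χ t : ι → ℚ} (hχ : χ ∈ CharOf B S) (ht : t ∈ dualOf B S) :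
    χ + (2 : ℚ) • t ∈ CharOf B S := by
  refine ⟨add_mem hχ.1 (by rw [two_smul]; exact add_mem ht ht), fun u hu => ?_⟩
  obtain ⟨m, hm⟩ := hχ.2 u hu
  obtain ⟨k, hk⟩ := ht.2 u hu
  exact ⟨m + k, by rw [qform_add_left, qform_smul_left, hk]; push_cast; linarith⟩

lemma half_sub_mem_dualOf {χ χ' : ι → ℚ} (hχ : χ ∈ CharOf B S) (hχ' : χ' ∈ CharOf B S) :
    (2⁻¹ : ℚ) • (χ' - χ) ∈ dualOf B S := by
  refine ⟨Submodule.smul_mem _ _ (Submodule.sub_mem _ hχ'.1.1 hχ.1.1), fun u hu => ?_⟩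
  obtain ⟨m, hm⟩ := hχ'.2 u hu
  obtain ⟨k, hk⟩ := hχ.2 u hu
  exact ⟨m - k, by rw [qform_smul_left, qform_sub_left]; push_cast; linarith⟩

lemma mem_charOf_of_eqOn {T : Set (ι → ℚ)} (hST : S ⊆ T) {χ ξ : ι → ℚ} (hχ : χ ∈ CharOf B T)
    (hξ : ξ ∈ dualOf B S) (h : ∀ u ∈ S, qform B ξ u = qform B χ u) : ξ ∈ CharOf B S :=
  ⟨hξ, fun u hu => h u hu ▸ hχ.2 u (hST hu)⟩

lemma mem_shortOf_iff (hB : B.IsSymm) (hsub : S ⊆ intVecs ι) {χ : ι → ℚ}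
    (hχ : χ ∈ CharOf B S) : χ ∈ ShortOf B S ↔ ∀ y ∈ S, 0 ≤ qform B χ y + qform B y y := by
  refine ⟨fun h y hy => ?_, fun h => ⟨hχ, ?_⟩⟩
  · have := h.2 _ (add_two_smul_mem_charOf hχ (mem_dualOf_of_mem hsub hy)) ⟨y, hy, rfl⟩
    rw [qform_add_two_smul_self hB] at this
    linarith
  · rintro _ - ⟨y, hy, rfl⟩
    rw [qform_add_two_smul_self hB]
    linarith [h y hy]

lemma mem_shortOf_of_add_two_smul (hS : IsLat S) {χ t : ι → ℚ}
    (hχt : χ + (2 : ℚ) • t ∈ ShortOf B S) (hχ : χ ∈ CharOf B S) (ht : t ∈ S)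
    (hle : qform B χ χ ≤ qform B (χ + (2 : ℚ) • t) (χ + (2 : ℚ) • t)) : χ ∈ ShortOf B S := by
  refine ⟨hχ, ?_⟩
  rintro _ hχ' ⟨y, hy, rfl⟩
  exact hle.trans (hχt.2 _ hχ' ⟨y - t, hS.2 y hy t ht, by rw [smul_sub]; abel⟩)

theorem mem_shortOf_of_eqOn (hB : B.IsSymm) (hsub : S ⊆ intVecs ι) {χ ξ : ι → ℚ}
    (hχ : χ ∈ ShortOf B (intVecs ι)) (hξ : ξ ∈ dualOf B S)
    (h : ∀ u ∈ S, qform B ξ u = qform B χ u) : ξ ∈ ShortOf B S := by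
  rw [mem_shortOf_iff hB hsub (mem_charOf_of_eqOn hsub hχ.1 hξ h)]
  intro y hy
  rw [h y hy]
  exact (mem_shortOf_iff hB subset_rfl hχ.1).mp hχ y (hsub hy)

lemma sum_sum_mul_mul_eq_sum_diag_zmod_two (s : Finset ι) (a : ι → ZMod 2)
    (b : ι → ι → ZMod 2) (hb : ∀ i j, b i j = b j i) :
    ∑ i ∈ s, ∑ j ∈ s, a i * b i j * a j = ∑ i ∈ s, b i i * a i := by
  induction s using Finset.induction with
  | empty => simp
  | insert k s hk ih =>
    simp only [Finset.sum_insert hk, Finset.sum_add_distrib, ih]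
    have hsq : a k * a k = a k := by generalize a k = x; revert x; decide
    have hcross : ∑ j ∈ s, a k * b k j * a j + ∑ i ∈ s, a i * b i k * a k = 0 := by
      rw [← Finset.sum_add_distrib]
      refine Finset.sum_eq_zero fun j _ => ?_
      have h2 : (2 : ZMod 2) = 0 := rfl
      rw [hb j k]
      linear_combination (a k * b k j * a j) * h2
    linear_combination b k k * hsq + hcross

lemma two_dvd_sum_sum_sub_sum_diag (hB : B.IsSymm) (n : ι → ℤ) :
    (2 : ℤ) ∣ ∑ i, ∑ j, n i * B i j * n j - ∑ i, B i i * n i := by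
  rw [← Nat.cast_ofNat, ← ZMod.intCast_zmod_eq_zero_iff_dvd]
  push_cast
  rw [sum_sum_mul_mul_eq_sum_diag_zmod_two _ _ (fun i j => (B i j : ZMod 2))
    (fun i j => by rw [hB.apply]), sub_self]

lemma exists_mem_charOf_intVecs (hB : B.IsSymm) (hpos : PosDefOn B (intVecs ι)) :
    ∃ χ, χ ∈ CharOf B (intVecs ι) := by
  obtain ⟨χ, -, hχ⟩ := exists_mem_forall_qform_eq hpos ⊤
    ((∑ i, (B i i : ℚ) • LinearMap.proj i).domRestrict ⊤)
  -- `χ` represents `y ↦ ∑ᵢ Bᵢᵢ yᵢ`, which agrees with `|y|` mod 2 on `ℤ^ι`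
  have hχ' : ∀ y, qform B χ y = ∑ i, (B i i : ℚ) * y i := fun y => by simpa using hχ ⟨y, trivial⟩
  refine ⟨χ, ⟨mem_span_intVecs χ, fun y hy => ?_⟩, fun y hy => ?_⟩
  · rw [hχ']
    exact isInt_sum fun i _ => isInt_mul (isInt_intCast _) (hy i)
  · choose n hn using hy
    obtain ⟨m, hm⟩ := two_dvd_sum_sum_sub_sum_diag hB n
    refine ⟨-m, ?_⟩
    have hm' := congrArg (Int.cast : ℤ → ℚ) hm
    push_cast [mul_assoc] at hm'
    rw [hχ']
    simp only [qform, dotProduct, mulVec, Matrix.map_apply, hn, Finset.mul_sum]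
    push_cast
    linear_combination -hm'

def IsLat.toAddSubgroup (hS : IsLat S) : AddSubgroup (ι → ℚ) :=
  AddSubgroup.ofSub S ⟨0, hS.1⟩ fun x hx y hy => by simpa [sub_eq_add_neg] using hS.2 x hx y hy

lemma exists_basis_of_subset_intVecs (hS : IsLat S) (hsub : S ⊆ intVecs ι) :
    ∃ (r : ℕ) (e : Fin r → ι → ℚ), (∀ i, e i ∈ S) ∧ LinearIndependent ℚ e ∧
      ∀ x ∈ S, ∃ c : Fin r → ℤ, x = ∑ i, (c i : ℚ) • e i := by
  let f : (ι → ℤ) →ₗ[ℤ] ι → ℚ := LinearMap.compLeft (Int.castAddHom ℚ).toIntLinearMap ι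
  have hf : Function.Injective f := Int.cast_injective.comp_left
  let N : Submodule ℤ (ι → ℤ) := hS.toAddSubgroup.toIntSubmodule.comap f
  obtain ⟨r, b⟩ := Submodule.basisOfPid (Pi.basisFun ℤ ι) N
  refine ⟨r, fun i => f (b i), fun i => (b i).2, ?_, fun x hx => ?_⟩
  · have := (b.linearIndependent.map' N.subtype N.ker_subtype).map' f (LinearMap.ker_eq_bot.mpr hf)
    exact (LinearIndependent.iff_fractionRing ℤ ℚ).mp this
  · choose n hn using hsub hx
    have hxn : x = f n := funext hn
    have hnN : n ∈ N := show f n ∈ S from hxn ▸ hx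
    refine ⟨b.repr ⟨n, hnN⟩, ?_⟩
    calc x = f ((∑ i, b.repr ⟨n, hnN⟩ i • b i : N) : ι → ℤ) := by rw [b.sum_repr, hxn]
      _ = _ := by
        simp only [Submodule.coe_sum, Submodule.coe_smul, map_sum, map_zsmul,
          Int.cast_smul_eq_zsmul]

lemma mem_of_mem_span_of_primitiveIn (hpos : PosDefOn B (intVecs ι)) (hS : IsLat S)
    (hsub : S ⊆ intVecs ι) (hprim : PrimitiveIn B (intVecs ι) S) {x : ι → ℚ}
    (hx : x ∈ intVecs ι) (hxS : x ∈ Submodule.span ℚ S) : x ∈ S := by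
  obtain ⟨r, e, heS, he, hSe⟩ := exists_basis_of_subset_intVecs hS hsub
  have hspan : Submodule.span ℚ S = Submodule.span ℚ (Set.range e) := by
    refine le_antisymm (Submodule.span_le.mpr fun u hu => ?_)
      (Submodule.span_le.mpr (Set.range_subset_iff.mpr fun i => Submodule.subset_span (heS i)))
    obtain ⟨c, rfl⟩ := hSe u hu
    exact Submodule.sum_mem _ fun i _ => Submodule.smul_mem _ _ (Submodule.subset_span ⟨i, rfl⟩)
  obtain ⟨b, hb⟩ : ∃ b : Module.Basis (Fin r) ℚ (Submodule.span ℚ (Set.range e)),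
      ∀ i, (b i : ι → ℚ) = e i := ⟨Module.Basis.span he, fun i => by simp⟩
  have hxe : x ∈ Submodule.span ℚ (Set.range e) := hspan ▸ hxS
  -- The coordinate functionals of `b` are represented by vectors of `S*`, which extend to `ℤ^ι`.
  have hcoord : ∀ i, isInt (b.coord i ⟨x, hxe⟩) := by
    intro i
    obtain ⟨w, hwe, hw⟩ := exists_mem_forall_qform_eq hpos _ (b.coord i)
    have hwS : w ∈ dualOf B S := by
      refine ⟨hspan ▸ hwe, fun u hu => ?_⟩
      obtain ⟨c, rfl⟩ := hSe u hu
      have hmem : ∑ k, (c k : ℚ) • e k ∈ Submodule.span ℚ (Set.range e) :=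
        hspan ▸ Submodule.subset_span hu
      have hsum : (⟨_, hmem⟩ : Submodule.span ℚ (Set.range e)) = ∑ k, (c k : ℚ) • b k :=
        Subtype.ext (by simp [hb])
      rw [hw ⟨_, hmem⟩, hsum, b.coord_apply, b.repr_sum_self]
      exact isInt_intCast _
    obtain ⟨z, hz, hzw⟩ := hprim w hwS
    rw [← hw, ← qform_eq_of_eqOn hzw hxS]
    exact hz.2 x hx
  choose m hm using hcoord
  have hxm : x = ∑ i, m i • e i := by
    have := congrArg Subtype.val (b.sum_repr ⟨x, hxe⟩)
    simp only [Submodule.coe_sum, Submodule.coe_smul, hb] at this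
    simp only [← b.coord_apply, hm, Int.cast_smul_eq_zsmul] at this
    exact this.symm
  rw [hxm]
  exact hS.toAddSubgroup.sum_mem fun i _ => hS.toAddSubgroup.zsmul_mem (heS i) _

lemma exists_charOf_eqOn (hB : B.IsSymm) (hpos : PosDefOn B (intVecs ι))
    (hsub : S ⊆ intVecs ι) (hprim : PrimitiveIn B (intVecs ι) S) {ξ : ι → ℚ}
    (hξ : ξ ∈ CharOf B S) :
    ∃ χ ∈ CharOf B (intVecs ι), ∀ u ∈ S, qform B χ u = qform B ξ u := by
  obtain ⟨z, -, hzξ⟩ := hprim ξ hξ.1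
  obtain ⟨χ₀, hχ₀⟩ := exists_mem_charOf_intVecs hB hpos
  -- `χ₀ - z` is even on `S`, so half of it is represented on `S` by a vector of `S*`
  obtain ⟨w, hwS, hw⟩ := exists_mem_span_forall_qform_eq hpos S ((2⁻¹ : ℚ) • (χ₀ - z))
  have hwd : w ∈ dualOf B S := by
    refine ⟨hwS, fun u hu => ?_⟩
    obtain ⟨m, hm⟩ := hχ₀.2 u (hsub hu)
    obtain ⟨k, hk⟩ := hξ.2 u hu
    exact ⟨m - k, by rw [hw u hu, qform_smul_left, qform_sub_left, hzξ u hu]; push_cast; linarith⟩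
  obtain ⟨d, hd, hdw⟩ := hprim w hwd
  refine ⟨χ₀ + (2 : ℚ) • -d, add_two_smul_mem_charOf hχ₀ (neg_mem hd), fun u hu => ?_⟩
  rw [qform_add_left, qform_smul_left, qform_neg_left, hdw u hu, hw u hu, qform_smul_left,
    qform_sub_left, hzξ u hu]
  ring

lemma exists_isMinOn_of_isInt {α : Type*} {s : Set α} (hs : s.Nonempty) {f : α → ℚ}
    (hint : ∀ x ∈ s, isInt (f x)) (hnonneg : ∀ x ∈ s, 0 ≤ f x) : ∃ x ∈ s, IsMinOn f s x := by
  classical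
  have hnat : ∀ x ∈ s, ∃ n : ℕ, f x = n := fun x hx => by
    obtain ⟨m, hm⟩ := hint x hx
    have hm0 : 0 ≤ m := by exact_mod_cast hm ▸ hnonneg x hx
    exact ⟨m.toNat, by rw [hm, ← Int.cast_natCast, Int.toNat_of_nonneg hm0]⟩
  obtain ⟨x₀, hx₀⟩ := hs
  have hex : ∃ n : ℕ, ∃ x ∈ s, f x = n := (hnat x₀ hx₀).imp fun n hn => ⟨x₀, hx₀, hn⟩
  obtain ⟨x, hx, hfx⟩ := Nat.find_spec hex
  refine ⟨x, hx, fun y hy => ?_⟩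
  obtain ⟨n, hn⟩ := hnat y hy
  show f x ≤ f y
  rw [hfx, hn]
  exact_mod_cast Nat.find_min' hex ⟨y, hy, hn⟩

/-- The witness minimizes the norm over a class `χ + 2 S₁`. -/
lemma exists_charOf_eqOn_isMin (hB : B.IsSymm) (hpos : PosDefOn B (intVecs ι))
    (huni : UnimodularOn B (intVecs ι)) (h₁ : IsLat S₁) (hsub₁ : S₁ ⊆ intVecs ι)
    (hsub₂ : S₂ ⊆ intVecs ι) (horth : OrthogonalSets B S₁ S₂)
    (hprim₂ : PrimitiveIn B (intVecs ι) S₂) {ξ : ι → ℚ} (hξ : ξ ∈ CharOf B S₂) :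
    ∃ χ ∈ CharOf B (intVecs ι), (∀ u ∈ S₂, qform B χ u = qform B ξ u) ∧
      ∀ y ∈ S₁, 0 ≤ qform B χ y + qform B y y := by
  obtain ⟨χ, hχ, hχξ⟩ := exists_charOf_eqOn hB hpos hsub₂ hprim₂ hξ
  have hχΛ := mem_intVecs_of_mem_dualOf huni hχ.1
  obtain ⟨y₀, hy₀, hmin⟩ := exists_isMinOn_of_isInt (s := S₁)
    (f := fun y => qform B (χ + (2 : ℚ) • y) (χ + (2 : ℚ) • y)) ⟨0, h₁.1⟩
    (fun y hy => have h := intVecs_add hχΛ (intVecs_two_smul (hsub₁ hy)); isInt_qform B h h)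
    (fun y _ => qform_self_nonneg hpos _)
  have hy₀d : y₀ ∈ dualOf B (intVecs ι) := mem_dualOf_of_mem subset_rfl (hsub₁ hy₀)
  refine ⟨χ + (2 : ℚ) • y₀, add_two_smul_mem_charOf hχ hy₀d, fun u hu => ?_, fun y hy => ?_⟩
  · rw [qform_add_left, qform_smul_left, horth y₀ hy₀ u hu, hχξ u hu, mul_zero, add_zero]
  · have h : qform B (χ + (2 : ℚ) • y₀) (χ + (2 : ℚ) • y₀)
        ≤ qform B (χ + (2 : ℚ) • (y₀ + y)) (χ + (2 : ℚ) • (y₀ + y)) :=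
      hmin (h₁.toAddSubgroup.add_mem hy₀ hy)
    rw [smul_add, ← add_assoc, qform_add_two_smul_self hB (χ + _)] at h
    linarith

lemma exists_shortOf_eqOn_of_surjOn (hB : B.IsSymm) (hpos : PosDefOn B (intVecs ι))
    (huni : UnimodularOn B (intVecs ι)) (h₁ : IsLat S₁) (h₂ : IsLat S₂)
    (hsub₁ : S₁ ⊆ intVecs ι) (hsub₂ : S₂ ⊆ intVecs ι) (horth : OrthogonalSets B S₁ S₂)
    (hsup : Submodule.span ℚ S₁ ⊔ Submodule.span ℚ S₂ = ⊤)
    (hprim₂ : PrimitiveIn B (intVecs ι) S₂)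
    (hsurj : ∀ ξ ∈ ShortOf B S₁, ∃ χ ∈ ShortOf B (intVecs ι),
      ∀ u ∈ S₁, qform B χ u = qform B ξ u)
    {ξ : ι → ℚ} (hξ : ξ ∈ ShortOf B S₂) :
    ∃ χ ∈ ShortOf B (intVecs ι), ∀ u ∈ S₂, qform B χ u = qform B ξ u := by
  obtain ⟨χ, hχ, hχξ, hχmin⟩ :=
    exists_charOf_eqOn_isMin hB hpos huni h₁ hsub₁ hsub₂ horth hprim₂ hξ.1
  obtain ⟨a, haS, ha⟩ := exists_mem_span_forall_qform_eq hpos S₁ χ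
  have haχ : a ∈ CharOf B S₁ := mem_charOf_of_eqOn hsub₁ hχ
    ⟨haS, fun u hu => by rw [ha u hu]; exact hχ.1.2 u (hsub₁ hu)⟩ ha
  have haShort : a ∈ ShortOf B S₁ :=
    (mem_shortOf_iff hB hsub₁ haχ).mpr fun y hy => ha y hy ▸ hχmin y hy
  obtain ⟨χ', hχ', hχ'a⟩ := hsurj a haShort
  -- `χ' = χ + 2t` where `t ⊥ S₁`, so that `t ∈ S₂` by saturation
  set t := (2⁻¹ : ℚ) • (χ' - χ) with ht_def
  have hχ'eq : χ' = χ + (2 : ℚ) • t := by rw [ht_def, smul_smul]; norm_num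
  have ht : t ∈ S₂ := by
    refine mem_of_mem_span_of_primitiveIn hpos h₂ hsub₂ hprim₂
      (mem_intVecs_of_mem_dualOf huni (half_sub_mem_dualOf hχ hχ'.1))
      (mem_span_of_forall_qform_eq_zero hB hpos horth hsup fun u hu => ?_)
    rw [qform_smul_left, qform_sub_left, hχ'a u hu, ha u hu, sub_self, mul_zero]
  refine ⟨χ, mem_shortOf_of_add_two_smul isLat_intVecs (hχ'eq ▸ hχ') hχ (hsub₂ ht) ?_, hχξ⟩
  rw [qform_add_two_smul_self hB, hχξ t ht]
  linarith [(mem_shortOf_iff hB hsub₂ hξ.1).mp hξ t ht]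

end

/-- For complementary primitive sublattices of an integral positive
definite unimodular lattice, the restriction maps carry `Short(Λ)` into `Short(Λᵢ)`,
and surjectivity onto `Short(Λ₁)` is equivalent to surjectivity onto `Short(Λ₂)`. -/
theorem stmt_8 (L : IntLattice) (S₁ S₂ : Set (Fin L.n → ℚ))
    (h₁ : IsLat S₁) (h₂ : IsLat S₂)
    (hsub₁ : S₁ ⊆ intVecs (Fin L.n)) (hsub₂ : S₂ ⊆ intVecs (Fin L.n))
    (hpos : PosDefOn L.B (intVecs (Fin L.n)))
    (huni : UnimodularOn L.B (intVecs (Fin L.n)))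
    (hcomp : ComplementaryIn L.B (intVecs (Fin L.n)) S₁ S₂)
    (hprim₁ : PrimitiveIn L.B (intVecs (Fin L.n)) S₁)
    (hprim₂ : PrimitiveIn L.B (intVecs (Fin L.n)) S₂) :
    (∀ χ ∈ ShortOf L.B (intVecs (Fin L.n)), ∀ ξ ∈ dualOf L.B S₁,
      (∀ u ∈ S₁, qform L.B ξ u = qform L.B χ u) → ξ ∈ ShortOf L.B S₁) ∧
    (∀ χ ∈ ShortOf L.B (intVecs (Fin L.n)), ∀ ξ ∈ dualOf L.B S₂,
      (∀ u ∈ S₂, qform L.B ξ u = qform L.B χ u) → ξ ∈ ShortOf L.B S₂) ∧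
    ((∀ ξ ∈ ShortOf L.B S₁, ∃ χ ∈ ShortOf L.B (intVecs (Fin L.n)),
        ∀ u ∈ S₁, qform L.B χ u = qform L.B ξ u) ↔
      (∀ ξ ∈ ShortOf L.B S₂, ∃ χ ∈ ShortOf L.B (intVecs (Fin L.n)),
        ∀ u ∈ S₂, qform L.B χ u = qform L.B ξ u)) := by
  obtain ⟨horth, hrk⟩ := hcomp
  have hsup := span_sup_span_eq_top hpos horth hrk
  refine ⟨fun χ hχ ξ hξ h => mem_shortOf_of_eqOn L.symm hsub₁ hχ hξ h,
    fun χ hχ ξ hξ h => mem_shortOf_of_eqOn L.symm hsub₂ hχ hξ h,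
    fun hsurj ξ hξ => ?_, fun hsurj ξ hξ => ?_⟩
  · exact exists_shortOf_eqOn_of_surjOn L.symm hpos huni h₁ h₂ hsub₁ hsub₂ horth hsup hprim₂
      hsurj hξ
  · exact exists_shortOf_eqOn_of_surjOn L.symm hpos huni h₂ h₁ hsub₂ hsub₁ (horth.symm L.symm)
      (sup_comm (Submodule.span ℚ S₁) _ ▸ hsup) hprim₁ hsurj hξ

end Greene
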